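/- Let θ be irrational and M ≥ 1. Write P^in_θ(M) = (a₁,…,a_k) and P^out_θ(M) = (b₁,…,b_l) with entries nonincreasing, and let m be minimal with ∑_{j=1}^m bⱼ ≥ a₁. Then for each n with 1 ≤ n ≤ m, one has δ_θ(a₁ − ∑_{j=1}^{n−1} bⱼ, bₙ) = 1, where δ_θ(a,b) := b⌈aθ⌉ − a⌊bθ⌋. -/

import Mathlib

open scoped Classical
open Finset

/-- The next (largest) entry of the incoming partition: the largest `a ∈ {1,…,M}`
such that `⌈aθ⌉/a < ⌈a'θ⌉/a'` for all `a' ∈ {1,…,a−1}`. -/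
noncomputable def pinStep (θ : ℝ) (M : ℕ) : ℕ :=
  WithBot.unbotD 0 (((Finset.Icc 1 M).filter (fun a : ℕ => ∀ a' ∈ Finset.Ico 1 a,
      ((⌈(a : ℝ) * θ⌉ : ℤ) : ℝ) / (a : ℝ) < ((⌈(a' : ℝ) * θ⌉ : ℤ) : ℝ) / (a' : ℝ))).max)

/-- Fuel-based recursion computing the incoming partition `P^in_θ(M)`. -/
noncomputable def pinListAux (θ : ℝ) : ℕ → ℕ → List ℕ
  | 0, _ => []
  | fuel + 1, M =>
      if M = 0 then [] else pinStep θ M :: pinListAux θ fuel (M - pinStep θ M)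

/-- The incoming partition `P^in_θ(M)`, listed in the order produced by the recursion
(which is nonincreasing). -/
noncomputable def pinList (θ : ℝ) (M : ℕ) : List ℕ := pinListAux θ M M

/-- The outgoing partition `P^out_θ(M) := P^in_{−θ}(M)`. -/
noncomputable def poutList (θ : ℝ) (M : ℕ) : List ℕ := pinList (-θ) M

/-!
Call `x ∈ [1, N]` a best upper approximation of `θ` of order `N` if `⌈xθ⌉ / x` is the least
of the fractions `⌈aθ⌉ / a` with `a ≤ N` and is reduced; a best lower approximation
(`⌊yθ⌋ / y` greatest) is a best upper approximation of `-θ`. The first part of a partition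
`P^in_θ(N)` (resp. `P^out_θ(N)`) is the best upper (resp. lower) approximation of order `N`.
A best upper `p / x` and a best lower `q / y` of the same order `N` are Farey neighbours:
`p y - q x = 1` and `N < x + y`. Consequently `(p - q) / (x - y)` is the best upper
approximation of order `N - y` whenever `y < x`. By induction, `a₁ - ∑_{j<n} bⱼ` is the best
upper and `bₙ` the best lower approximation of order `M - ∑_{j<n} bⱼ`, and `δ_θ` of the
two is their Farey determinant.
-/

section Records

variable {α : Type*} [LinearOrder α]

noncomputable def records (f : ℕ → α) (M : ℕ) : Finset ℕ :=
  (Icc 1 M).filter fun a => ∀ a' ∈ Ico 1 a, f a < f a'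

theorem mem_records {f : ℕ → α} {M a : ℕ} :
    a ∈ records f M ↔ a ∈ Icc 1 M ∧ ∀ a' ∈ Ico 1 a, f a < f a' := by
  simp [records]

/-- The least minimiser of `f` on `[1, M]` is a record, and a later record would take a smaller
value. -/
theorem exists_max_records_eq {f : ℕ → α} {M : ℕ} (hM : 1 ≤ M) :
    ∃ r ∈ records f M, (records f M).max = r ∧ ∀ a ∈ Icc 1 M, f r ≤ f a := by
  have hmin : ∃ s, s ∈ Icc 1 M ∧ ∀ a ∈ Icc 1 M, f s ≤ f a :=
    (Icc 1 M).exists_min_image f ⟨1, by simpa using hM⟩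
  obtain ⟨hs, hsmin⟩ := Nat.find_spec hmin
  have hsrec : Nat.find hmin ∈ records f M := by
    refine mem_records.2 ⟨hs, fun a' ha' => lt_of_not_ge fun hle => ?_⟩
    have ha's := Nat.find_min' hmin
      ⟨Icc_subset_Icc_right (mem_Icc.1 hs).2 (Ico_subset_Icc_self ha'),
        fun a ha => hle.trans (hsmin a ha)⟩
    exact (mem_Ico.1 ha').2.not_ge ha's
  have hne : (records f M).Nonempty := ⟨_, hsrec⟩
  have hr := mem_records.1 (max'_mem _ hne)
  refine ⟨_, max'_mem _ hne, (coe_max' hne).symm, fun a ha => ?_⟩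
  obtain hsr | hsr := (le_max' _ _ hsrec).eq_or_lt
  · exact hsr ▸ hsmin a ha
  · exact absurd (hr.2 _ (mem_Ico.2 ⟨(mem_Icc.1 hs).1, hsr⟩)) (hsmin _ hr.1).not_gt

end Records

theorem pinStep_eq_unbotD_max_records (θ : ℝ) (M : ℕ) :
    pinStep θ M = ((records (fun a : ℕ => (⌈(a : ℝ) * θ⌉ : ℝ) / a) M).max).unbotD 0 :=
  rfl

structure IsBestUpperApprox (θ : ℝ) (N x : ℤ) : Prop where
  pos : 0 < x
  le : x ≤ N
  ceil_mul_le : ∀ a : ℤ, 0 < a → a ≤ N → ⌈(x : ℝ) * θ⌉ * a ≤ ⌈(a : ℝ) * θ⌉ * x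
  isCoprime : IsCoprime ⌈(x : ℝ) * θ⌉ x

/-- If `⌈rθ⌉ / r = g p₀ / (g r₀)` with `g ≥ 2`, then `⌈r₀θ⌉ / r₀ ≤ p₀ / r₀` is no larger. -/
theorem isCoprime_ceil_mul_of_forall_lt {θ : ℝ} {r : ℤ} (hr : 0 < r)
    (hrec : ∀ a : ℤ, 0 < a → a < r → ⌈(r : ℝ) * θ⌉ * a < ⌈(a : ℝ) * θ⌉ * r) :
    IsCoprime ⌈(r : ℝ) * θ⌉ r := by
  set p := ⌈(r : ℝ) * θ⌉
  obtain ⟨g, p₀, r₀, hg, hcop, hp, hr₀⟩ :=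
    Int.exists_gcd_one' (Int.gcd_pos_of_ne_zero_right p hr.ne')
  obtain rfl | hg2 : g = 1 ∨ 2 ≤ g := by omega
  · simpa [Int.isCoprime_iff_gcd_eq_one, hp, hr₀] using hcop
  have hr₀pos : 0 < r₀ := pos_of_mul_pos_left (hr₀ ▸ hr) (by positivity)
  have hceil : ⌈(r₀ : ℝ) * θ⌉ ≤ p₀ := by
    have h : (r : ℝ) * θ ≤ p := Int.le_ceil _
    rw [hp, hr₀] at h
    push_cast at h
    exact Int.ceil_le.2 (le_of_mul_le_mul_right (by linarith) (by positivity : (0 : ℝ) < g))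
  have hlt := hrec r₀ hr₀pos (by rw [hr₀]; nlinarith)
  have hle : ⌈(r₀ : ℝ) * θ⌉ * r ≤ p₀ * r := mul_le_mul_of_nonneg_right hceil hr.le
  have heq : p * r₀ = p₀ * r := by rw [hp, hr₀]; ring
  linarith

theorem isBestUpperApprox_pinStep (θ : ℝ) {M : ℕ} (hM : 1 ≤ M) :
    IsBestUpperApprox θ M (pinStep θ M) := by
  obtain ⟨r, hr, hmax, hmin⟩ :=
    exists_max_records_eq (f := fun a : ℕ => (⌈(a : ℝ) * θ⌉ : ℝ) / a) hM
  rw [pinStep_eq_unbotD_max_records, hmax]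
  show IsBestUpperApprox θ M r
  obtain ⟨hrM, hrec⟩ := mem_records.1 hr
  obtain ⟨hr1, hrM⟩ := mem_Icc.1 hrM
  have hr0 : (0 : ℝ) < r := Nat.cast_pos.2 hr1
  refine ⟨by omega, by omega, fun a ha haM => ?_,
    isCoprime_ceil_mul_of_forall_lt (by omega) fun a ha har => ?_⟩
  · lift a to ℕ using ha.le
    have h := hmin a (mem_Icc.2 ⟨by omega, by omega⟩)
    rw [div_le_div_iff₀ hr0 (Nat.cast_pos.2 (by omega))] at h
    push_cast
    exact_mod_cast h
  · lift a to ℕ using ha.le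
    have h := hrec a (mem_Ico.2 ⟨by omega, by omega⟩)
    rw [div_lt_div_iff₀ hr0 (Nat.cast_pos.2 (by omega))] at h
    push_cast
    exact_mod_cast h

/-- `s = y (P s - r X) + X (r y - q s)`. -/
theorem add_le_of_det_eq_one {q y P X r s : ℤ} (hy : 0 ≤ y) (hX : 0 ≤ X)
    (hdet : P * y - q * X = 1) (hl : q * s < r * y) (hr : r * X < P * s) : X + y ≤ s := by
  have hs : s = y * (P * s - r * X) + X * (r * y - q * s) := by
    linear_combination (-s) * hdet
  nlinarith [mul_nonneg hy (by omega : (0 : ℤ) ≤ P * s - r * X - 1),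
    mul_nonneg hX (by omega : (0 : ℤ) ≤ r * y - q * s - 1)]

theorem det_eq_one_of_forall_not_between {N p q x y : ℤ} (hy : 0 < y)
    (hxN : x ≤ N) (hyN : y ≤ N) (hpx : IsCoprime p x) (hqy : IsCoprime q y)
    (hlt : q * x < p * y)
    (hgap : ∀ r s : ℤ, 0 < s → s ≤ N → q * s < r * y → ¬r * x < p * s) :
    p * y - q * x = 1 ∧ N < x + y := by
  obtain ⟨u, v, huv⟩ := hqy
  -- `p' / x'` is the right neighbour of `q / y` in the Farey sequence of order `N`; the gap
  -- hypothesis and `add_le_of_det_eq_one` force `p / x = p' / x'`.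
  have hdiv := Int.emod_add_mul_ediv (N + u) y
  have hmod := Int.emod_lt_of_pos (N + u) hy
  have hmod0 := Int.emod_nonneg (N + u) hy.ne'
  set t := (N + u) / y
  set x' := N - (N + u) % y
  have hx' : x' = y * t - u := by omega
  have hx'lo : N - y < x' := by omega
  have hx'hi : x' ≤ N := by omega
  set p' := v + q * t
  have hdet' : p' * y - q * x' = 1 := by rw [hx']; linear_combination huv
  have hle : p * x' ≤ p' * x := not_lt.1 (hgap p' x' (by omega) hx'hi (by linarith))
  have hge : p' * x ≤ p * x' := by
    by_contra! h
    have := add_le_of_det_eq_one hy.le (by omega) hdet' hlt h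
    omega
  have heq : p * x' = p' * x := le_antisymm hle hge
  set D := p * y - q * x
  have hDx : x = D * x' := by linear_combination (-x) * hdet' + (-y) * heq
  have hDp : p = D * p' := by
    refine mul_right_cancel₀ (by omega : x' ≠ 0) ?_
    linear_combination heq + p' * hDx
  have hD : D = 1 := by
    rcases Int.isUnit_iff.1 (hpx.isUnit_of_dvd' ⟨p', hDp⟩ ⟨x', hDx⟩) with h | h
    · exact h
    · omega
  rw [hD, one_mul] at hDx
  exact ⟨hD, by omega⟩

theorem Irrational.floor_lt {a : ℝ} (h : Irrational a) : (⌊a⌋ : ℝ) < a :=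
  (Int.floor_le a).lt_of_ne fun e => h.ne_int _ e.symm

theorem Irrational.lt_ceil {a : ℝ} (h : Irrational a) : a < ⌈a⌉ :=
  (Int.le_ceil a).lt_of_ne fun e => h.ne_int _ e

theorem floor_mul_lt_ceil_mul {θ : ℝ} (hθ : Irrational θ) {x y : ℤ} (hx : 0 < x) (hy : 0 < y) :
    ⌊(y : ℝ) * θ⌋ * x < ⌈(x : ℝ) * θ⌉ * y := by
  have hfloor := (hθ.intCast_mul hy.ne').floor_lt
  have hceil := (hθ.intCast_mul hx.ne').lt_ceil
  have hx' : (0 : ℝ) < x := Int.cast_pos.2 hx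
  have hy' : (0 : ℝ) < y := Int.cast_pos.2 hy
  have : (⌊(y : ℝ) * θ⌋ : ℝ) * x < ⌈(x : ℝ) * θ⌉ * y := by nlinarith
  exact_mod_cast this

namespace IsBestUpperApprox

variable {θ : ℝ} {N x y : ℤ}

theorem floor_mul_le (hy : IsBestUpperApprox (-θ) N y) {b : ℤ} (hb : 0 < b) (hbN : b ≤ N) :
    ⌊(b : ℝ) * θ⌋ * y ≤ ⌊(y : ℝ) * θ⌋ * b := by
  have h := hy.ceil_mul_le b hb hbN
  simp only [mul_neg, Int.ceil_neg] at h
  linarith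

theorem isCoprime_floor (hy : IsBestUpperApprox (-θ) N y) : IsCoprime ⌊(y : ℝ) * θ⌋ y := by
  simpa only [mul_neg, Int.ceil_neg, IsCoprime.neg_left_iff] using hy.isCoprime

theorem not_between (hx : IsBestUpperApprox θ N x) (hy : IsBestUpperApprox (-θ) N y)
    {r s : ℤ} (hs : 0 < s) (hsN : s ≤ N) (hl : ⌊(y : ℝ) * θ⌋ * s < r * y) :
    ¬r * x < ⌈(x : ℝ) * θ⌉ * s := by
  intro hr
  rcases le_or_gt ((s : ℝ) * θ) r with h | h
  · have hsr : ⌈(s : ℝ) * θ⌉ * x ≤ r * x :=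
      mul_le_mul_of_nonneg_right (Int.ceil_le.2 h) hx.pos.le
    linarith [hx.ceil_mul_le s hs hsN]
  · have hsr : r * y ≤ ⌊(s : ℝ) * θ⌋ * y :=
      mul_le_mul_of_nonneg_right (Int.le_floor.2 h.le) hy.pos.le
    linarith [hy.floor_mul_le hs hsN]

theorem det_eq_one (hθ : Irrational θ) (hx : IsBestUpperApprox θ N x)
    (hy : IsBestUpperApprox (-θ) N y) :
    ⌈(x : ℝ) * θ⌉ * y - ⌊(y : ℝ) * θ⌋ * x = 1 ∧ N < x + y :=
  det_eq_one_of_forall_not_between hy.pos hx.le hy.le hx.isCoprime hy.isCoprime_floor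
    (floor_mul_lt_ceil_mul hθ hx.pos hy.pos) fun _ _ hs hsN hl => hx.not_between hy hs hsN hl

/-- `(p - q) / (x - y)` and `q / y` are again Farey neighbours, now of order `N - y`. -/
theorem sub (hθ : Irrational θ) (hx : IsBestUpperApprox θ N x)
    (hy : IsBestUpperApprox (-θ) N y) (hyx : y < x) :
    IsBestUpperApprox θ (N - y) (x - y) := by
  obtain ⟨hdet, hN⟩ := hx.det_eq_one hθ hy
  have hx0 := hx.pos
  have hxN := hx.le
  have hy0 := hy.pos
  set p := ⌈(x : ℝ) * θ⌉
  set q := ⌊(y : ℝ) * θ⌋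
  have hdet' : (p - q) * y - q * (x - y) = 1 := by linear_combination hdet
  have hceil : ⌈((x - y : ℤ) : ℝ) * θ⌉ = p - q := by
    have hp : (x : ℝ) * θ < p := (hθ.intCast_mul hx0.ne').lt_ceil
    have hq : (q : ℝ) < y * θ := (hθ.intCast_mul hy0.ne').floor_lt
    have hdetR : (p : ℝ) * y - q * x = 1 := by exact_mod_cast hdet
    have hy1 : (1 : ℝ) ≤ y := by exact_mod_cast hy0
    have hx2 : (2 : ℝ) ≤ x := by exact_mod_cast (by omega : (2 : ℤ) ≤ x)
    rw [Int.ceil_eq_iff]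
    push_cast
    constructor <;> nlinarith
  refine ⟨by omega, by omega, fun c hc hcN => ?_, ?_⟩
  · rw [hceil]
    by_contra! h
    have := add_le_of_det_eq_one hy0.le (by omega) hdet' (floor_mul_lt_ceil_mul hθ hc hy0) h
    omega
  · rw [hceil]
    exact ⟨y, -q, by linear_combination hdet⟩

end IsBestUpperApprox

theorem pinListAux_getD (θ : ℝ) : ∀ fuel M i, i < (pinListAux θ fuel M).length →
    (pinListAux θ fuel M).getD i 0 = pinStep θ (M - ((pinListAux θ fuel M).take i).sum)
  | 0, M, i, h => by simp [pinListAux] at h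
  | fuel + 1, M, i, h => by
    by_cases hM : M = 0
    · simp [pinListAux, hM] at h
    rw [pinListAux, if_neg hM] at h ⊢
    cases i with
    | zero => simp
    | succ i =>
      simp only [List.getD_cons_succ, List.take_succ_cons, List.sum_cons, ← Nat.sub_sub]
      exact pinListAux_getD θ fuel _ i (by simpa using h)

theorem pinList_headI (θ : ℝ) {M : ℕ} (hM : 1 ≤ M) : (pinList θ M).headI = pinStep θ M := by
  obtain ⟨M, rfl⟩ := Nat.exists_eq_add_of_le' hM
  simp [pinList, pinListAux]

theorem pinStep_le (θ : ℝ) {M : ℕ} (hM : 1 ≤ M) : pinStep θ M ≤ M := by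
  exact_mod_cast (isBestUpperApprox_pinStep θ hM).le

theorem isBestUpperApprox_neg_getD_poutList (θ : ℝ) {M k : ℕ} (hk : k < (poutList θ M).length)
    (hS : ((poutList θ M).take k).sum < M) :
    IsBestUpperApprox (-θ) ((M : ℤ) - ((poutList θ M).take k).sum) ((poutList θ M).getD k 0) := by
  have hget : (poutList θ M).getD k 0 = pinStep (-θ) (M - ((poutList θ M).take k).sum) :=
    pinListAux_getD (-θ) M M k hk
  rw [hget, ← Nat.cast_sub hS.le]
  exact isBestUpperApprox_pinStep (-θ) (Nat.sub_pos_of_lt hS)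

theorem isBestUpperApprox_sub_sum_take_poutList {θ : ℝ} (hθ : Irrational θ) {M : ℕ}
    (hM : 1 ≤ M) : ∀ k ≤ (poutList θ M).length, ((poutList θ M).take k).sum < pinStep θ M →
    IsBestUpperApprox θ ((M : ℤ) - ((poutList θ M).take k).sum)
      ((pinStep θ M : ℤ) - ((poutList θ M).take k).sum)
  | 0, _, _ => by simpa using isBestUpperApprox_pinStep θ hM
  | k + 1, hk, hS => by
    have hsucc : ((poutList θ M).take (k + 1)).sum =
        ((poutList θ M).take k).sum + (poutList θ M).getD k 0 := by
      rw [List.sum_take_succ _ _ hk, List.getD_eq_getElem _ _ hk]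
    rw [hsucc] at hS ⊢
    have hx := isBestUpperApprox_sub_sum_take_poutList hθ hM k (by omega) (by omega)
    have hy := isBestUpperApprox_neg_getD_poutList θ hk (by linarith [pinStep_le θ hM])
    have := hx.sub hθ hy (by omega)
    rw [Nat.cast_add]
    convert this using 1 <;> ring

theorem delta_theta_eq_one_general (θ : ℝ) (hθ : Irrational θ) (M : ℕ) (hM : 1 ≤ M) (m : ℕ)
    (hml : m ≤ (poutList θ M).length)
    (hm2 : ∀ m' < m, (((poutList θ M).take m').sum) < (pinList θ M).headI) :
    ∀ n : ℕ, 1 ≤ n → n ≤ m →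
      ((poutList θ M).getD (n - 1) 0 : ℤ) *
          ⌈((((pinList θ M).headI : ℤ) - (((poutList θ M).take (n - 1)).sum : ℤ) : ℤ) : ℝ) * θ⌉ -
        (((pinList θ M).headI : ℤ) - (((poutList θ M).take (n - 1)).sum : ℤ)) *
          ⌊(((poutList θ M).getD (n - 1) 0 : ℕ) : ℝ) * θ⌋ = 1 := by
  intro n hn hnm
  rw [pinList_headI θ hM] at hm2 ⊢
  have hS := hm2 (n - 1) (by omega)
  have hx := isBestUpperApprox_sub_sum_take_poutList hθ hM (n - 1) (by omega) hS
  have hy := isBestUpperApprox_neg_getD_poutList θ (k := n - 1) (by omega)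
    (hS.trans_le (pinStep_le θ hM))
  have hdet := (hx.det_eq_one hθ hy).1
  push_cast at hdet ⊢
  linarith

/-- with `a₁` the first entry of `P^in_θ(M)`, `b` the outgoing
partition `P^out_θ(M)`, and `m` minimal with `∑_{j≤m} bⱼ ≥ a₁`, one has
`δ_θ(a₁ − ∑_{j<n} bⱼ, bₙ) = 1` for each `1 ≤ n ≤ m`, where
`δ_θ(x,y) = y⌈xθ⌉ − x⌊yθ⌋`. -/
theorem delta_theta_eq_one (θ : ℝ) (hθ : Irrational θ) (M : ℕ) (hM : 1 ≤ M) (m : ℕ)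
    (hml : m ≤ (poutList θ M).length)
    (hm1 : (pinList θ M).headI ≤ (((poutList θ M).take m).sum))
    (hm2 : ∀ m' < m, (((poutList θ M).take m').sum) < (pinList θ M).headI) :
    ∀ n : ℕ, 1 ≤ n → n ≤ m →
      ((poutList θ M).getD (n - 1) 0 : ℤ) *
          ⌈((((pinList θ M).headI : ℤ) - (((poutList θ M).take (n - 1)).sum : ℤ) : ℤ) : ℝ) * θ⌉ -
        (((pinList θ M).headI : ℤ) - (((poutList θ M).take (n - 1)).sum : ℤ)) *
          ⌊(((poutList θ M).getD (n - 1) 0 : ℕ) : ℝ) * θ⌋ = 1 :=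
  delta_theta_eq_one_general θ hθ M hM m hml hm2
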